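/- arXiv:2510.16132 — 5 statements merged into one kernel-verified Lean document; each statement's English description precedes it below -/
import Mathlib

section
/- Let μ̄ be a probability distribution on S × A with μ̄(s,a) > 0 for all (s,a), and set D_min := min_{(s,a)} μ̄(s,a). Then for all Q₁, Q₂ : S × A → ℝ one has ‖F̄(Q₁,μ̄) − F̄(Q₂,μ̄)‖∞ ≤ (1 − D_min(1−γ)) ‖Q₁ − Q₂‖∞, and for all Q : S × A → ℝ one has ‖F̄(Q,μ̄)‖∞ ≤ ‖Q‖∞ + 1. -/
/-! At each `(s,a)`, `F̄(·,μ̄)` is the convex combination, with weight `μ̄(s,a)`, of the identity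
and of `H`, which is `γ`-Lipschitz for `‖·‖∞` because a maximum over actions is 1-Lipschitz and
`p(·|s,a)` averages. Hence `F̄(·,μ̄)` is `(1 − μ̄(s,a)(1−γ))`-Lipschitz at `(s,a)`, and
`μ̄(s,a) ≥ D_min`. The growth bound follows by comparing `F̄(Q,μ̄)` with `F̄(0,μ̄) = μ̄ R`. -/

section

variable {S A : Type*} [Fintype S] [Fintype A] [Nonempty S] [Nonempty A]

/-- Sup norm on `S × A → ℝ`. -/
noncomputable def supNorm (Q : S × A → ℝ) : ℝ :=
  Finset.univ.sup' Finset.univ_nonempty fun y => |Q y|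

/-- The Bellman optimality operator. -/
noncomputable def bellmanOpt (p : S × A → S → ℝ) (R : S × A → ℝ) (γ : ℝ)
    (Q : S × A → ℝ) : S × A → ℝ :=
  fun sa => R sa + γ * ∑ s', p sa s' *
    (Finset.univ.sup' Finset.univ_nonempty fun a' => Q (s', a'))

/-- The expected operator `F̄(Q,μ̄)(s,a) = (1 − μ̄(s,a)) Q(s,a) + μ̄(s,a) H(Q)(s,a)`. -/
noncomputable def Fbar (p : S × A → S → ℝ) (R : S × A → ℝ) (γ : ℝ)
    (μ : S × A → ℝ) (Q : S × A → ℝ) : S × A → ℝ :=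
  fun sa => (1 - μ sa) * Q sa + μ sa * bellmanOpt p R γ Q sa


lemma Finset.sup'_le_sup'_add {ι α : Type*} [AddCommGroup α] [LinearOrder α]
    [IsOrderedAddMonoid α] {s : Finset ι} (hs : s.Nonempty) {f g : ι → α} {c : α}
    (h : ∀ i ∈ s, f i ≤ g i + c) : s.sup' hs f ≤ s.sup' hs g + c :=
  Finset.sup'_le _ _ fun i hi => (h i hi).trans (add_le_add_left (Finset.le_sup' g hi) c)

lemma Finset.abs_sup'_sub_sup'_le {ι α : Type*} [AddCommGroup α] [LinearOrder α]
    [IsOrderedAddMonoid α] {s : Finset ι} (hs : s.Nonempty) {f g : ι → α} {c : α}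
    (h : ∀ i ∈ s, |f i - g i| ≤ c) : |s.sup' hs f - s.sup' hs g| ≤ c := by
  rw [abs_sub_le_iff, sub_le_iff_le_add', sub_le_iff_le_add']
  exact ⟨Finset.sup'_le_sup'_add hs fun i hi => sub_le_iff_le_add'.mp (abs_sub_le_iff.mp (h i hi)).1,
    Finset.sup'_le_sup'_add hs fun i hi => sub_le_iff_le_add'.mp (abs_sub_le_iff.mp (h i hi)).2⟩

lemma abs_sum_mul_le_of_abs_le {ι : Type*} [Fintype ι] {w f : ι → ℝ} {c : ℝ}
    (hw0 : ∀ i, 0 ≤ w i) (hw1 : ∑ i, w i = 1) (hf : ∀ i, |f i| ≤ c) :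
    |∑ i, w i * f i| ≤ c :=
  calc |∑ i, w i * f i| ≤ ∑ i, |w i * f i| := Finset.abs_sum_le_sum_abs _ _
    _ ≤ ∑ i, w i * c := Finset.sum_le_sum fun i _ => by
        rw [abs_mul, abs_of_nonneg (hw0 i)]
        exact mul_le_mul_of_nonneg_left (hf i) (hw0 i)
    _ = c := by rw [← Finset.sum_mul, hw1, one_mul]

lemma abs_le_supNorm (Q : S × A → ℝ) (sa : S × A) : |Q sa| ≤ supNorm Q :=
  Finset.le_sup' (fun y => |Q y|) (Finset.mem_univ sa)

lemma supNorm_le {Q : S × A → ℝ} {c : ℝ} (h : ∀ sa, |Q sa| ≤ c) : supNorm Q ≤ c :=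
  Finset.sup'_le _ _ fun sa _ => h sa

lemma supNorm_nonneg (Q : S × A → ℝ) : 0 ≤ supNorm Q :=
  (abs_nonneg _).trans (abs_le_supNorm Q (Classical.arbitrary _))

section Bellman

variable {p : S × A → S → ℝ} {R : S × A → ℝ} {γ : ℝ}

omit [Nonempty S] in
lemma bellmanOpt_zero_apply (sa : S × A) : bellmanOpt p R γ 0 sa = R sa := by
  simp [bellmanOpt]

lemma abs_bellmanOpt_sub_le (hp0 : ∀ sa s', 0 ≤ p sa s') (hp1 : ∀ sa, ∑ s', p sa s' = 1)
    (hγ : 0 ≤ γ) (Q₁ Q₂ : S × A → ℝ) (sa : S × A) :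
    |bellmanOpt p R γ Q₁ sa - bellmanOpt p R γ Q₂ sa| ≤ γ * supNorm (Q₁ - Q₂) := by
  have hsub : bellmanOpt p R γ Q₁ sa - bellmanOpt p R γ Q₂ sa =
      γ * ∑ s', p sa s' * ((Finset.univ.sup' Finset.univ_nonempty fun a' => Q₁ (s', a')) -
        (Finset.univ.sup' Finset.univ_nonempty fun a' => Q₂ (s', a'))) := by
    simp only [bellmanOpt, mul_sub, Finset.sum_sub_distrib]
    ring
  rw [hsub, abs_mul, abs_of_nonneg hγ]
  refine mul_le_mul_of_nonneg_left (abs_sum_mul_le_of_abs_le (hp0 sa) (hp1 sa) fun s' => ?_) hγ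
  exact Finset.abs_sup'_sub_sup'_le _ fun a' _ => abs_le_supNorm (Q₁ - Q₂) (s', a')

variable {μ : S × A → ℝ}

omit [Nonempty S] in
lemma Fbar_zero_apply (sa : S × A) : Fbar p R γ μ 0 sa = μ sa * R sa := by
  simp [Fbar, bellmanOpt_zero_apply]

lemma abs_Fbar_sub_le (hp0 : ∀ sa s', 0 ≤ p sa s') (hp1 : ∀ sa, ∑ s', p sa s' = 1)
    (hγ : 0 ≤ γ) {sa : S × A} (hμ0 : 0 ≤ μ sa) (hμ1 : μ sa ≤ 1) (Q₁ Q₂ : S × A → ℝ) :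
    |Fbar p R γ μ Q₁ sa - Fbar p R γ μ Q₂ sa| ≤ (1 - μ sa * (1 - γ)) * supNorm (Q₁ - Q₂) :=
  calc |Fbar p R γ μ Q₁ sa - Fbar p R γ μ Q₂ sa|
      = |(1 - μ sa) * (Q₁ - Q₂) sa +
          μ sa * (bellmanOpt p R γ Q₁ sa - bellmanOpt p R γ Q₂ sa)| := by
        simp only [Fbar, Pi.sub_apply]
        ring_nf
    _ ≤ (1 - μ sa) * supNorm (Q₁ - Q₂) + μ sa * (γ * supNorm (Q₁ - Q₂)) := by
        refine (abs_add_le _ _).trans ?_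
        rw [abs_mul, abs_mul, abs_of_nonneg (sub_nonneg.mpr hμ1), abs_of_nonneg hμ0]
        exact add_le_add
          (mul_le_mul_of_nonneg_left (abs_le_supNorm _ _) (sub_nonneg.mpr hμ1))
          (mul_le_mul_of_nonneg_left (abs_bellmanOpt_sub_le hp0 hp1 hγ Q₁ Q₂ sa) hμ0)
    _ = (1 - μ sa * (1 - γ)) * supNorm (Q₁ - Q₂) := by ring

end Bellman

/-- `F̄(·,μ̄)` is a `(1 − D_min(1−γ))`-contraction and satisfies
`‖F̄(Q,μ̄)‖∞ ≤ ‖Q‖∞ + 1`. -/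
theorem stmt_1
    (p : S × A → S → ℝ)
    (hp0 : ∀ sa s', 0 ≤ p sa s')
    (hp1 : ∀ sa, ∑ s', p sa s' = 1)
    (R : S × A → ℝ) (hR : ∀ sa, |R sa| ≤ 1)
    (γ : ℝ) (hγ0 : 0 < γ) (hγ1 : γ < 1)
    (μ : S × A → ℝ) (hμ0 : ∀ sa, 0 < μ sa) (hμ1 : ∑ sa, μ sa = 1) :
    (∀ Q₁ Q₂ : S × A → ℝ,
      supNorm (Fbar p R γ μ Q₁ - Fbar p R γ μ Q₂) ≤
        (1 - (Finset.univ.inf' Finset.univ_nonempty fun y => μ y) * (1 - γ)) *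
          supNorm (Q₁ - Q₂)) ∧
    (∀ Q : S × A → ℝ, supNorm (Fbar p R γ μ Q) ≤ supNorm Q + 1) := by
  have hμ_le_one (sa : S × A) : μ sa ≤ 1 :=
    hμ1 ▸ Finset.single_le_sum (fun i _ => (hμ0 i).le) (Finset.mem_univ sa)
  have hF (sa : S × A) := abs_Fbar_sub_le (R := R) (μ := μ) hp0 hp1 hγ0.le (hμ0 sa).le
    (hμ_le_one sa)
  refine ⟨fun Q₁ Q₂ => supNorm_le fun sa => ?_, fun Q => supNorm_le fun sa => ?_⟩
  · have hmin : (Finset.univ.inf' Finset.univ_nonempty fun y => μ y) ≤ μ sa :=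
      Finset.inf'_le _ (Finset.mem_univ sa)
    refine (hF sa Q₁ Q₂).trans (mul_le_mul_of_nonneg_right ?_ (supNorm_nonneg _))
    nlinarith
  · have hFQ := hF sa Q 0
    rw [sub_zero, Fbar_zero_apply] at hFQ
    have hN := supNorm_nonneg Q
    calc |Fbar p R γ μ Q sa|
        ≤ |Fbar p R γ μ Q sa - μ sa * R sa| + |μ sa * R sa| :=
          sub_le_iff_le_add.mp (abs_sub_abs_le_abs_sub _ _)
      _ ≤ (1 - μ sa * (1 - γ)) * supNorm Q + μ sa * 1 := by
        rw [abs_mul, abs_of_pos (hμ0 sa)]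
        exact add_le_add hFQ (mul_le_mul_of_nonneg_left (hR sa) (hμ0 sa).le)
      _ ≤ supNorm Q + 1 := by
        nlinarith [mul_nonneg (mul_nonneg (hμ0 sa).le (sub_nonneg.mpr hγ1.le)) hN, hμ_le_one sa]

end
end

section
/- Let X be a finite nonempty set, P a row-stochastic matrix on X, and μ a probability vector on X such that the lazy matrix 𝒫 = (P + I)/2 has mixing parameters (C,ρ) with respect to μ. Let y : X → ℝ satisfy Σ_x μ(x) y(x) = 0. Then the series Σ_{k=0}^∞ 𝒫^k y converges in ℝ^X, and its sum x := (1/2) Σ_{k=0}^∞ 𝒫^k y satisfies (I − P) x = y and ‖x‖∞ ≤ C ‖y‖∞ / (1 − ρ), where ‖v‖∞ := max_x |v(x)|. -/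
/-!
Since `μ ⬝ᵥ y = 0`, the `x`-entry of `𝒫^k y` equals `∑_{x'} (𝒫^k(x,x') − μ(x')) y(x')`, so the
mixing bound gives `‖𝒫^k y‖∞ ≤ 2 C ρ^k ‖y‖∞`. Hence `S = ∑_k 𝒫^k y` converges with
`‖S‖∞ ≤ 2 C ‖y‖∞ / (1 − ρ)`, and the series telescopes: `(I − 𝒫) S = y`. As `I − P = 2 (I − 𝒫)`,
the vector `S / 2` solves the Poisson equation.
-/

section

variable {X : Type*} [Fintype X] [DecidableEq X] [Nonempty X]

/-- Sup norm of a vector. -/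
noncomputable def vecSupNorm (v : X → ℝ) : ℝ :=
  Finset.univ.sup' Finset.univ_nonempty fun x => |v x|

/-- The lazy matrix `𝒫 = (P + I)/2`. -/
noncomputable def lazy (P : Matrix X X ℝ) : Matrix X X ℝ :=
  (2⁻¹ : ℝ) • (P + 1)

/-- Mixing parameters `(C, ρ)` for a matrix `M` with respect to `μ`:
`max_x (1/2) Σ_{x'} |M^k(x,x') − μ(x')| ≤ C ρ^k` for all `k ≥ 0`. -/
def HasMixing (M : Matrix X X ℝ) (μ : X → ℝ) (C ρ : ℝ) : Prop :=
  ∀ k : ℕ, ∀ x : X, (2⁻¹ : ℝ) * ∑ x', |(M ^ k) x x' - μ x'| ≤ C * ρ ^ k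

open Matrix

theorem vecSupNorm_eq_norm {ι : Type*} [Fintype ι] [Nonempty ι] (v : ι → ℝ) :
    vecSupNorm v = ‖v‖ := by
  refine le_antisymm (Finset.sup'_le _ _ fun i _ => norm_le_pi_norm v i) ?_
  exact (pi_norm_le_iff_of_nonempty v).2 fun i =>
    Finset.le_sup' (fun j => |v j|) (Finset.mem_univ i)

theorem one_sub_eq_two_smul_one_sub_lazy {n : Type*} [DecidableEq n] (P : Matrix n n ℝ) :
    1 - P = (2 : ℝ) • (1 - lazy P) := by
  unfold lazy
  module

theorem abs_mulVec_apply_le_of_dotProduct_eq_zero {m n : Type*} [Fintype n]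
    (A : Matrix m n ℝ) {μ y : n → ℝ} (hy : μ ⬝ᵥ y = 0) (i : m) :
    |(A *ᵥ y) i| ≤ (∑ j, |A i j - μ j|) * ‖y‖ := by
  have hcentered : (A *ᵥ y) i = ∑ j, (A i j - μ j) * y j := by
    simp only [sub_mul, Finset.sum_sub_distrib]
    exact (sub_eq_self.2 hy).symm
  calc |(A *ᵥ y) i| ≤ ∑ j, |A i j - μ j| * |y j| := by
        rw [hcentered]
        simpa only [abs_mul] using Finset.abs_sum_le_sum_abs (fun j => (A i j - μ j) * y j) _
    _ ≤ ∑ j, |A i j - μ j| * ‖y‖ := by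
        gcongr with j
        exact norm_le_pi_norm y j
    _ = (∑ j, |A i j - μ j|) * ‖y‖ := (Finset.sum_mul _ _ _).symm

theorem HasMixing.norm_pow_mulVec_le {n : Type*} [Fintype n] [DecidableEq n] [Nonempty n]
    {M : Matrix n n ℝ} {μ : n → ℝ} {C ρ : ℝ} (hmix : HasMixing M μ C ρ)
    {y : n → ℝ} (hy : μ ⬝ᵥ y = 0) (k : ℕ) :
    ‖(M ^ k) *ᵥ y‖ ≤ 2 * C * ‖y‖ * ρ ^ k := by
  refine (pi_norm_le_iff_of_nonempty _).2 fun i => ?_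
  calc ‖((M ^ k) *ᵥ y) i‖ ≤ (∑ j, |(M ^ k) i j - μ j|) * ‖y‖ :=
        abs_mulVec_apply_le_of_dotProduct_eq_zero _ hy i
    _ ≤ 2 * (C * ρ ^ k) * ‖y‖ := by
        gcongr
        linarith [hmix k i]
    _ = 2 * C * ‖y‖ * ρ ^ k := by ring

theorem Matrix.one_sub_mulVec_tsum_pow_mulVec {R n : Type*} [CommRing R] [TopologicalSpace R]
    [IsTopologicalRing R] [T2Space R] [Fintype n] [DecidableEq n] {M : Matrix n n R}
    {y : n → R} (h : Summable fun k => (M ^ k) *ᵥ y) :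
    (1 - M) *ᵥ ∑' k, (M ^ k) *ᵥ y = y := by
  have hshift : M *ᵥ ∑' k, (M ^ k) *ᵥ y = ∑' k, (M ^ (k + 1)) *ᵥ y := by
    rw [show M *ᵥ ∑' k, (M ^ k) *ᵥ y = mulVecLin M (∑' k, (M ^ k) *ᵥ y) from rfl,
      h.map_tsum _ (continuous_const.matrix_mulVec continuous_id)]
    simp only [mulVecLin_apply, mulVec_mulVec, pow_succ']
  rw [sub_mulVec, one_mulVec, hshift, h.tsum_eq_zero_add, pow_zero, one_mulVec,
    add_sub_cancel_right]

theorem stmt_6_general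
    (P : Matrix X X ℝ)
    (μ : X → ℝ)
    (C ρ : ℝ) (hρ0 : 0 < ρ) (hρ1 : ρ < 1)
    (hmix : HasMixing (lazy P) μ C ρ)
    (y : X → ℝ) (hy : ∑ x, μ x * y x = 0) :
    Summable (fun k : ℕ => (lazy P ^ k).mulVec y) ∧
    (1 - P).mulVec ((2⁻¹ : ℝ) • ∑' k : ℕ, (lazy P ^ k).mulVec y) = y ∧
    vecSupNorm ((2⁻¹ : ℝ) • ∑' k : ℕ, (lazy P ^ k).mulVec y) ≤
      C * vecSupNorm y / (1 - ρ) := by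
  have hbound := hmix.norm_pow_mulVec_le hy
  have hgeom : HasSum (fun k => 2 * C * ‖y‖ * ρ ^ k) (2 * C * ‖y‖ * (1 - ρ)⁻¹) :=
    (hasSum_geometric_of_lt_one hρ0.le hρ1).mul_left _
  have hsum : Summable fun k => (lazy P ^ k) *ᵥ y := .of_norm_bounded hgeom.summable hbound
  refine ⟨hsum, ?_, ?_⟩
  · rw [one_sub_eq_two_smul_one_sub_lazy, smul_mulVec, mulVec_smul, smul_smul,
      one_sub_mulVec_tsum_pow_mulVec hsum]
    norm_num
  · rw [vecSupNorm_eq_norm, vecSupNorm_eq_norm, norm_smul]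
    calc ‖(2⁻¹ : ℝ)‖ * ‖∑' k, (lazy P ^ k) *ᵥ y‖ ≤ 2⁻¹ * (2 * C * ‖y‖ * (1 - ρ)⁻¹) := by
          rw [Real.norm_of_nonneg (by norm_num)]
          gcongr
          exact tsum_of_norm_bounded hgeom hbound
      _ = C * ‖y‖ / (1 - ρ) := by ring

/-- If `μ^⊤ y = 0`, the series `Σ_k 𝒫^k y` converges, and
`x = (1/2) Σ_k 𝒫^k y` solves the Poisson equation `(I − P)x = y` with
`‖x‖∞ ≤ C‖y‖∞/(1 − ρ)`. -/
theorem stmt_6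
    (P : Matrix X X ℝ)
    (hP0 : ∀ x x', 0 ≤ P x x')
    (hP1 : ∀ x, ∑ x', P x x' = 1)
    (μ : X → ℝ) (hμ0 : ∀ x, 0 ≤ μ x) (hμ1 : ∑ x, μ x = 1)
    (C ρ : ℝ) (hC : 0 < C) (hρ0 : 0 < ρ) (hρ1 : ρ < 1)
    (hmix : HasMixing (lazy P) μ C ρ)
    (y : X → ℝ) (hy : ∑ x, μ x * y x = 0) :
    Summable (fun k : ℕ => (lazy P ^ k).mulVec y) ∧
    (1 - P).mulVec ((2⁻¹ : ℝ) • ∑' k : ℕ, (lazy P ^ k).mulVec y) = y ∧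
    vecSupNorm ((2⁻¹ : ℝ) • ∑' k : ℕ, (lazy P ^ k).mulVec y) ≤
      C * vecSupNorm y / (1 - ρ) :=
  stmt_6_general P μ C ρ hρ0 hρ1 hmix y hy

end
end

section
/- Let X be a finite nonempty set and let P₁, P₂ be row-stochastic matrices on X with probability vectors μ₁, μ₂ such that the lazy matrices 𝒫ᵢ = (Pᵢ + I)/2 have mixing parameters (Cᵢ, ρᵢ) with respect to μᵢ (i = 1,2). Let y₁, y₂ : X → ℝ satisfy Σ_x μᵢ(x) yᵢ(x) = 0, and set xᵢ := (1/2) Σ_{k=0}^∞ 𝒫ᵢ^k yᵢ, C_max := max(C₁,C₂), ρ_max := max(ρ₁,ρ₂). Then for every integer n ≥ 1: ‖x₁ − x₂‖∞ ≤ C_max n² ρ_max^n (‖y₁‖∞ + ‖y₂‖∞)/(1 − ρ_max) + (n²/8) ‖P₁ − P₂‖_{∞,op} (‖y₁‖∞ + ‖y₂‖∞) + (n/2) ‖y₁ − y₂‖∞, where ‖v‖∞ := max_x |v(x)| and ‖M‖_{∞,op} := max_x Σ_{x'} |M(x,x')| is the max-row-sum (ℓ∞-induced) matrix norm. -/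
/-!
Split `x₁ - x₂ = ½ ∑ₖ (𝒫₁ᵏ y₁ - 𝒫₂ᵏ y₂)` at `k = n`. Since `μᵢ ⬝ᵥ yᵢ = 0`,
`𝒫ᵢᵏ yᵢ = (𝒫ᵢᵏ - 𝟙μᵢᵀ) yᵢ`, and the mixing bound says that `𝒫ᵢᵏ - 𝟙μᵢᵀ` has row-sum norm at most
`2 Cᵢ ρᵢᵏ`; summing the geometric tail gives the first term. For `k < n`, write
`𝒫₁ᵏ y₁ - 𝒫₂ᵏ y₂ = (𝒫₁ᵏ - 𝒫₂ᵏ) y₁ + 𝒫₂ᵏ (y₁ - y₂)`. Stochastic matrices have row-sum norm `1`,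
so telescoping gives `‖𝒫₁ᵏ - 𝒫₂ᵏ‖ ≤ k ‖𝒫₁ - 𝒫₂‖ = k ‖P₁ - P₂‖ / 2`, and `∑_{k<n} k ≤ n² / 2`.
-/

section

variable {X : Type*} [Fintype X] [DecidableEq X] [Nonempty X]

/-- Max-row-sum (ℓ∞-induced) matrix norm. -/
noncomputable def rowSumNorm (M : Matrix X X ℝ) : ℝ :=
  Finset.univ.sup' Finset.univ_nonempty fun x => ∑ x', |M x x'|

theorem norm_pow_sub_pow_le_of_norm_le_one {R : Type*} [SeminormedRing R] [NormOneClass R]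
    {a b : R} (ha : ‖a‖ ≤ 1) (hb : ‖b‖ ≤ 1) (k : ℕ) :
    ‖a ^ k - b ^ k‖ ≤ k * ‖a - b‖ := by
  induction k with
  | zero => simp
  | succ k ih =>
    have hdecomp : a ^ (k + 1) - b ^ (k + 1) = a * (a ^ k - b ^ k) + (a - b) * b ^ k := by
      rw [pow_succ', pow_succ']; noncomm_ring
    calc ‖a ^ (k + 1) - b ^ (k + 1)‖
        ≤ ‖a‖ * ‖a ^ k - b ^ k‖ + ‖a - b‖ * ‖b ^ k‖ := by
          rw [hdecomp]
          exact (norm_add_le _ _).trans (add_le_add (norm_mul_le _ _) (norm_mul_le _ _))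
      _ ≤ 1 * (k * ‖a - b‖) + ‖a - b‖ * 1 := by
          gcongr
          exact (norm_pow_le _ _).trans (pow_le_one₀ (norm_nonneg _) hb)
      _ = (k + 1 : ℕ) * ‖a - b‖ := by push_cast; ring

theorem sum_range_natCast_le (n : ℕ) : ∑ k ∈ Finset.range n, (k : ℝ) ≤ n ^ 2 / 2 := by
  induction n with
  | zero => simp
  | succ n ih => rw [Finset.sum_range_succ]; push_cast; nlinarith

theorem norm_tsum_nat_add_le_of_geometric {E : Type*} [NormedAddCommGroup E] {f : ℕ → E}
    {a ρ : ℝ} (hρ0 : 0 ≤ ρ) (hρ1 : ρ < 1) (hf : ∀ k, ‖f k‖ ≤ a * ρ ^ k) (n : ℕ) :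
    ‖∑' k, f (k + n)‖ ≤ a * ρ ^ n / (1 - ρ) := by
  refine tsum_of_norm_bounded ((hasSum_geometric_of_lt_one hρ0 hρ1).mul_left (a * ρ ^ n))
    fun k => ?_
  calc ‖f (k + n)‖ ≤ a * ρ ^ (k + n) := hf _
    _ = a * ρ ^ n * ρ ^ k := by ring

theorem norm_tsum_sub_tsum_le {E : Type*} [NormedAddCommGroup E] [CompleteSpace E]
    {f g : ℕ → E} {a b c d ρ : ℝ} (hρ0 : 0 ≤ ρ) (hρ1 : ρ < 1)
    (hf : ∀ k, ‖f k‖ ≤ a * ρ ^ k) (hg : ∀ k, ‖g k‖ ≤ b * ρ ^ k)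
    (hc : 0 ≤ c) (hfg : ∀ k, ‖f k - g k‖ ≤ k * c + d) (n : ℕ) :
    ‖∑' k, f k - ∑' k, g k‖ ≤ (a + b) * ρ ^ n / (1 - ρ) + n ^ 2 / 2 * c + n * d := by
  have hgeom := summable_geometric_of_lt_one hρ0 hρ1
  have hsplit : ∑' k, f k - ∑' k, g k =
      ∑ k ∈ Finset.range n, (f k - g k) + (∑' k, f (k + n) - ∑' k, g (k + n)) := by
    rw [← (Summable.of_norm_bounded (hgeom.mul_left a) hf).sum_add_tsum_nat_add n,
      ← (Summable.of_norm_bounded (hgeom.mul_left b) hg).sum_add_tsum_nat_add n,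
      Finset.sum_sub_distrib]
    abel
  have hhead : ‖∑ k ∈ Finset.range n, (f k - g k)‖ ≤ n ^ 2 / 2 * c + n * d :=
    calc ‖∑ k ∈ Finset.range n, (f k - g k)‖
        ≤ ∑ k ∈ Finset.range n, ((k : ℝ) * c + d) := norm_sum_le_of_le _ fun k _ => hfg k
      _ = (∑ k ∈ Finset.range n, (k : ℝ)) * c + n * d := by
        rw [Finset.sum_add_distrib, ← Finset.sum_mul, Finset.sum_const, Finset.card_range,
          nsmul_eq_mul]
      _ ≤ n ^ 2 / 2 * c + n * d := by gcongr; exact sum_range_natCast_le n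
  have htail : ‖∑' k, f (k + n) - ∑' k, g (k + n)‖ ≤ (a + b) * ρ ^ n / (1 - ρ) :=
    calc ‖∑' k, f (k + n) - ∑' k, g (k + n)‖
        ≤ a * ρ ^ n / (1 - ρ) + b * ρ ^ n / (1 - ρ) :=
          (norm_sub_le _ _).trans (add_le_add (norm_tsum_nat_add_le_of_geometric hρ0 hρ1 hf n)
            (norm_tsum_nat_add_le_of_geometric hρ0 hρ1 hg n))
      _ = (a + b) * ρ ^ n / (1 - ρ) := by ring
  rw [hsplit]
  linarith [norm_add_le (∑ k ∈ Finset.range n, (f k - g k)) (∑' k, f (k + n) - ∑' k, g (k + n))]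

omit [DecidableEq X] in
theorem vecSupNorm_eq_norm_s8 (v : X → ℝ) : vecSupNorm v = ‖v‖ :=
  le_antisymm (Finset.sup'_le _ _ fun x _ => norm_le_pi_norm v x)
    ((pi_norm_le_iff_of_nonempty _).2 fun x => Finset.le_sup' (fun x => |v x|) (Finset.mem_univ x))

section MatrixNorm

open scoped Matrix Matrix.Norms.Operator

theorem rowSumNorm_eq_norm (M : Matrix X X ℝ) : rowSumNorm M = ‖M‖ := by
  have hrow : ∀ x, ‖WithLp.toLp 1 (M x)‖ = ∑ x', |M x x'| := fun x => by
    simp [PiLp.norm_eq_of_L1]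
  -- the operator norm is, by construction, the sup norm of the rows viewed in `ℓ¹`
  change _ = ‖fun x => WithLp.toLp 1 (M x)‖
  exact le_antisymm
    (Finset.sup'_le _ _ fun x _ =>
      (hrow x).symm.le.trans (norm_le_pi_norm (fun x => WithLp.toLp 1 (M x)) x))
    ((pi_norm_le_iff_of_nonempty _).2 fun x => (hrow x).le.trans
      (Finset.le_sup' (fun x => ∑ x', |M x x'|) (Finset.mem_univ x)))

theorem rowSumNorm_nonneg (M : Matrix X X ℝ) : 0 ≤ rowSumNorm M :=
  (rowSumNorm_eq_norm M).symm ▸ norm_nonneg M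

theorem norm_le_one_of_mem_rowStochastic {M : Matrix X X ℝ}
    (hM : M ∈ Matrix.rowStochastic ℝ X) : ‖M‖ ≤ 1 := by
  rw [← rowSumNorm_eq_norm]
  refine Finset.sup'_le _ _ fun x _ => ?_
  simp_rw [abs_of_nonneg (Matrix.nonneg_of_mem_rowStochastic hM)]
  exact (Matrix.sum_row_of_mem_rowStochastic hM x).le

omit [Nonempty X] in
theorem lazy_mem_rowStochastic {P : Matrix X X ℝ} (hP : P ∈ Matrix.rowStochastic ℝ X) :
    lazy P ∈ Matrix.rowStochastic ℝ X := by
  have := Matrix.convex_rowStochastic hP (one_mem _) (by norm_num : (0 : ℝ) ≤ 2⁻¹)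
    (by norm_num : (0 : ℝ) ≤ 2⁻¹) (by norm_num)
  simpa [lazy, smul_add] using this

omit [Fintype X] [Nonempty X] in
theorem lazy_sub_lazy (P Q : Matrix X X ℝ) : lazy P - lazy Q = (2⁻¹ : ℝ) • (P - Q) := by
  simp only [lazy, ← smul_sub, add_sub_add_right_eq_sub]

theorem rowSumNorm_lazy_sub_lazy (P Q : Matrix X X ℝ) :
    rowSumNorm (lazy P - lazy Q) = 2⁻¹ * rowSumNorm (P - Q) := by
  rw [rowSumNorm_eq_norm, rowSumNorm_eq_norm, lazy_sub_lazy, norm_smul]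
  norm_num

theorem norm_pow_mulVec_sub_pow_mulVec_le {A B : Matrix X X ℝ}
    (hA : A ∈ Matrix.rowStochastic ℝ X) (hB : B ∈ Matrix.rowStochastic ℝ X) (v w : X → ℝ)
    (k : ℕ) : ‖A ^ k *ᵥ v - B ^ k *ᵥ w‖ ≤ k * (rowSumNorm (A - B) * ‖v‖) + ‖v - w‖ := by
  have hsplit : A ^ k *ᵥ v - B ^ k *ᵥ w = (A ^ k - B ^ k) *ᵥ v + B ^ k *ᵥ (v - w) := by
    rw [Matrix.sub_mulVec, Matrix.mulVec_sub]
    abel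
  rw [hsplit, rowSumNorm_eq_norm]
  calc ‖(A ^ k - B ^ k) *ᵥ v + B ^ k *ᵥ (v - w)‖
      ≤ ‖A ^ k - B ^ k‖ * ‖v‖ + ‖B ^ k‖ * ‖v - w‖ :=
        (norm_add_le _ _).trans
          (add_le_add (Matrix.linfty_opNorm_mulVec _ _) (Matrix.linfty_opNorm_mulVec _ _))
    _ ≤ k * ‖A - B‖ * ‖v‖ + 1 * ‖v - w‖ := by
        gcongr
        · exact norm_pow_sub_pow_le_of_norm_le_one (norm_le_one_of_mem_rowStochastic hA)
            (norm_le_one_of_mem_rowStochastic hB) k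
        · exact norm_le_one_of_mem_rowStochastic (pow_mem hB k)
    _ = k * (‖A - B‖ * ‖v‖) + ‖v - w‖ := by ring

namespace HasMixing

variable {M : Matrix X X ℝ} {μ : X → ℝ} {C ρ : ℝ}

theorem mul_pow_nonneg (h : HasMixing M μ C ρ) (k : ℕ) : 0 ≤ C * ρ ^ k := by
  obtain ⟨x⟩ := ‹Nonempty X›
  exact (mul_nonneg (by norm_num) (Finset.sum_nonneg fun _ _ => abs_nonneg _)).trans (h k x)

theorem mono (h : HasMixing M μ C ρ) {C' ρ' : ℝ} (hC : C ≤ C') (hρ0 : 0 ≤ ρ) (hρ : ρ ≤ ρ') :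
    HasMixing M μ C' ρ' := by
  have hC0 : 0 ≤ C := by simpa using h.mul_pow_nonneg 0
  exact fun k x => (h k x).trans
    (mul_le_mul hC (pow_le_pow_left₀ hρ0 hρ k) (pow_nonneg hρ0 k) (hC0.trans hC))

theorem norm_pow_sub_replicateRow_le (h : HasMixing M μ C ρ) (k : ℕ) :
    ‖M ^ k - Matrix.replicateRow X μ‖ ≤ 2 * C * ρ ^ k := by
  rw [← rowSumNorm_eq_norm]
  refine Finset.sup'_le _ _ fun x _ => ?_
  simp only [Matrix.sub_apply, Matrix.replicateRow_apply]
  linarith [h k x]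

theorem norm_pow_mulVec_le_s8 (h : HasMixing M μ C ρ) {y : X → ℝ} (hy : μ ⬝ᵥ y = 0) (k : ℕ) :
    ‖M ^ k *ᵥ y‖ ≤ 2 * C * ‖y‖ * ρ ^ k := by
  have hcenter : M ^ k *ᵥ y = (M ^ k - Matrix.replicateRow X μ) *ᵥ y := by
    rw [Matrix.sub_mulVec, Matrix.replicateRow_mulVec_eq_const, hy]
    simp
  calc ‖M ^ k *ᵥ y‖ ≤ ‖M ^ k - Matrix.replicateRow X μ‖ * ‖y‖ :=
        hcenter ▸ Matrix.linfty_opNorm_mulVec _ _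
    _ ≤ 2 * C * ρ ^ k * ‖y‖ := by gcongr; exact h.norm_pow_sub_replicateRow_le k
    _ = 2 * C * ‖y‖ * ρ ^ k := by ring

end HasMixing

end MatrixNorm

theorem stmt_8_general
    (P₁ P₂ : Matrix X X ℝ)
    (hP₁0 : ∀ x x', 0 ≤ P₁ x x') (hP₁1 : ∀ x, ∑ x', P₁ x x' = 1)
    (hP₂0 : ∀ x x', 0 ≤ P₂ x x') (hP₂1 : ∀ x, ∑ x', P₂ x x' = 1)
    (μ₁ μ₂ : X → ℝ)
    (C₁ ρ₁ C₂ ρ₂ : ℝ)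
    (hρ₁0 : 0 < ρ₁) (hρ₁1 : ρ₁ < 1)
    (hρ₂0 : 0 < ρ₂) (hρ₂1 : ρ₂ < 1)
    (hmix₁ : HasMixing (lazy P₁) μ₁ C₁ ρ₁)
    (hmix₂ : HasMixing (lazy P₂) μ₂ C₂ ρ₂)
    (y₁ y₂ : X → ℝ)
    (hy₁ : ∑ x, μ₁ x * y₁ x = 0) (hy₂ : ∑ x, μ₂ x * y₂ x = 0)
    (x₁ x₂ : X → ℝ)
    (hx₁ : x₁ = (2⁻¹ : ℝ) • ∑' k : ℕ, (lazy P₁ ^ k).mulVec y₁)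
    (hx₂ : x₂ = (2⁻¹ : ℝ) • ∑' k : ℕ, (lazy P₂ ^ k).mulVec y₂) :
    ∀ n : ℕ, 1 ≤ n →
      vecSupNorm (x₁ - x₂) ≤
        max C₁ C₂ * (n : ℝ) ^ 2 * max ρ₁ ρ₂ ^ n *
            (vecSupNorm y₁ + vecSupNorm y₂) / (1 - max ρ₁ ρ₂)
        + (n : ℝ) ^ 2 / 8 * rowSumNorm (P₁ - P₂) *
            (vecSupNorm y₁ + vecSupNorm y₂)
        + (n : ℝ) / 2 * vecSupNorm (y₁ - y₂) := by
  intro n hn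
  set C := max C₁ C₂
  set ρ := max ρ₁ ρ₂
  have hρ0 : 0 ≤ ρ := hρ₁0.le.trans (le_max_left _ _)
  have hρ1 : ρ < 1 := max_lt hρ₁1 hρ₂1
  have hC0 : 0 ≤ C := (by simpa using hmix₁.mul_pow_nonneg 0 : 0 ≤ C₁).trans (le_max_left _ _)
  have hS₁ := lazy_mem_rowStochastic (Matrix.mem_rowStochastic_iff_sum.2 ⟨hP₁0, hP₁1⟩)
  have hS₂ := lazy_mem_rowStochastic (Matrix.mem_rowStochastic_iff_sum.2 ⟨hP₂0, hP₂1⟩)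
  have hsum := norm_tsum_sub_tsum_le hρ0 hρ1
    ((hmix₁.mono (le_max_left C₁ C₂) hρ₁0.le (le_max_left ρ₁ ρ₂)).norm_pow_mulVec_le_s8 hy₁)
    ((hmix₂.mono (le_max_right C₁ C₂) hρ₂0.le (le_max_right ρ₁ ρ₂)).norm_pow_mulVec_le_s8 hy₂)
    (mul_nonneg (rowSumNorm_nonneg _) (norm_nonneg y₁))
    (norm_pow_mulVec_sub_pow_mulVec_le hS₁ hS₂ y₁ y₂) n
  rw [rowSumNorm_lazy_sub_lazy] at hsum
  have hn2 : (1 : ℝ) ≤ (n : ℝ) ^ 2 := one_le_pow₀ (by exact_mod_cast hn)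
  have htail : 0 ≤ C * ρ ^ n * (‖y₁‖ + ‖y₂‖) / (1 - ρ) := by
    have := sub_pos.2 hρ1
    positivity
  simp only [vecSupNorm_eq_norm_s8]
  calc ‖x₁ - x₂‖ = 2⁻¹ * ‖∑' k, (lazy P₁ ^ k).mulVec y₁ - ∑' k, (lazy P₂ ^ k).mulVec y₂‖ := by
        rw [hx₁, hx₂, ← smul_sub, norm_smul]
        norm_num
    _ ≤ 2⁻¹ * ((2 * C * ‖y₁‖ + 2 * C * ‖y₂‖) * ρ ^ n / (1 - ρ)
          + n ^ 2 / 2 * (2⁻¹ * rowSumNorm (P₁ - P₂) * ‖y₁‖) + n * ‖y₁ - y₂‖) := by gcongr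
    _ ≤ _ := by
        rw [show (2 * C * ‖y₁‖ + 2 * C * ‖y₂‖) * ρ ^ n / (1 - ρ)
            = 2 * (C * ρ ^ n * (‖y₁‖ + ‖y₂‖) / (1 - ρ)) by ring,
          show C * n ^ 2 * ρ ^ n * (‖y₁‖ + ‖y₂‖) / (1 - ρ)
            = n ^ 2 * (C * ρ ^ n * (‖y₁‖ + ‖y₂‖) / (1 - ρ)) by ring]
        linarith [mul_le_mul_of_nonneg_right hn2 htail, mul_nonneg (sq_nonneg (n : ℝ))
          (mul_nonneg (rowSumNorm_nonneg (P₁ - P₂)) (norm_nonneg y₂))]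

/-- Sensitivity bound for solutions of the Poisson equation built from the lazy
chains of two stochastic matrices. -/
theorem stmt_8
    (P₁ P₂ : Matrix X X ℝ)
    (hP₁0 : ∀ x x', 0 ≤ P₁ x x') (hP₁1 : ∀ x, ∑ x', P₁ x x' = 1)
    (hP₂0 : ∀ x x', 0 ≤ P₂ x x') (hP₂1 : ∀ x, ∑ x', P₂ x x' = 1)
    (μ₁ μ₂ : X → ℝ)
    (hμ₁0 : ∀ x, 0 ≤ μ₁ x) (hμ₁1 : ∑ x, μ₁ x = 1)
    (hμ₂0 : ∀ x, 0 ≤ μ₂ x) (hμ₂1 : ∑ x, μ₂ x = 1)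
    (C₁ ρ₁ C₂ ρ₂ : ℝ)
    (hC₁ : 0 < C₁) (hρ₁0 : 0 < ρ₁) (hρ₁1 : ρ₁ < 1)
    (hC₂ : 0 < C₂) (hρ₂0 : 0 < ρ₂) (hρ₂1 : ρ₂ < 1)
    (hmix₁ : HasMixing (lazy P₁) μ₁ C₁ ρ₁)
    (hmix₂ : HasMixing (lazy P₂) μ₂ C₂ ρ₂)
    (y₁ y₂ : X → ℝ)
    (hy₁ : ∑ x, μ₁ x * y₁ x = 0) (hy₂ : ∑ x, μ₂ x * y₂ x = 0)
    (x₁ x₂ : X → ℝ)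
    (hx₁ : x₁ = (2⁻¹ : ℝ) • ∑' k : ℕ, (lazy P₁ ^ k).mulVec y₁)
    (hx₂ : x₂ = (2⁻¹ : ℝ) • ∑' k : ℕ, (lazy P₂ ^ k).mulVec y₂) :
    ∀ n : ℕ, 1 ≤ n →
      vecSupNorm (x₁ - x₂) ≤
        max C₁ C₂ * (n : ℝ) ^ 2 * max ρ₁ ρ₂ ^ n *
            (vecSupNorm y₁ + vecSupNorm y₂) / (1 - max ρ₁ ρ₂)
        + (n : ℝ) ^ 2 / 8 * rowSumNorm (P₁ - P₂) *
            (vecSupNorm y₁ + vecSupNorm y₂)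
        + (n : ℝ) / 2 * vecSupNorm (y₁ - y₂) :=
  stmt_8_general P₁ P₂ hP₁0 hP₁1 hP₂0 hP₂1 μ₁ μ₂ C₁ ρ₁ C₂ ρ₂ hρ₁0 hρ₁1 hρ₂0 hρ₂1 hmix₁ hmix₂ y₁ y₂
    hy₁ hy₂ x₁ x₂ hx₁ hx₂

end
end

section
/- Let d ≥ 1, let N : ℝ^d → ℝ be a norm (N(x) ≥ 0 with equality iff x = 0, N(c·x) = |c| N(x), N(x+y) ≤ N(x) + N(y)), and let ℓ, u > 0 satisfy ℓ·N(x) ≤ ‖x‖∞ ≤ u·N(x) for all x, where ‖x‖∞ := max_i |x_i|. Suppose M(x) := N(x)²/2 is Fréchet differentiable on ℝ^d. Let γ̄ ∈ [0,1), let F̄ : ℝ^d → ℝ^d satisfy ‖F̄(x) − F̄(y)‖∞ ≤ γ̄ ‖x − y‖∞ for all x, y, and let Q* be a fixed point of F̄. Then for every Q ∈ ℝ^d, the Fréchet derivative of M at Q − Q* evaluated at the direction F̄(Q) − Q satisfies DM(Q − Q*)[F̄(Q) − Q] ≤ −2 (1 − (u/ℓ) γ̄) M(Q − Q*). -/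
/-!
The Euler identity for the 2-homogeneous function `M = N²/2` gives `DM(x)[x] = N(x)²`, and
comparing `t ↦ M(x + t v)` with `t ↦ (N(x) + t N(v))²/2` for `t ≥ 0` gives
`DM(x)[v] ≤ N(x) N(v)`. With `x = Q − Q*` and `v = F̄(Q) − F̄(Q*)`, so that `F̄(Q) − Q = v − x`,
the norm equivalence and the contraction property give `N(v) ≤ (u/ℓ) γ̄ N(x)`.
-/

open Set

variable {E : Type*} [NormedAddCommGroup E] [NormedSpace ℝ E]

theorem HasFDerivAt.apply_self_eq_of_homogeneous {f : E → ℝ} {f' : E →L[ℝ] ℝ} {x : E} (n : ℕ)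
    (hf : HasFDerivAt f f' x) (hhom : ∀ t : ℝ, f (t • x) = t ^ n * f x) :
    f' x = n * f x := by
  have hray : HasDerivAt (fun t : ℝ => f (t • x)) (f' x) 1 := by
    have := hf.comp_hasDerivAt_of_eq (1 : ℝ) ((hasDerivAt_id' (1 : ℝ)).smul_const x)
      (one_smul ℝ x).symm
    rwa [one_smul] at this
  have hpow : HasDerivAt (fun t : ℝ => f (t • x)) (n * f x) 1 := by
    simp_rw [hhom]
    simpa using (hasDerivAt_pow n (1 : ℝ)).mul_const (f x)
  exact hray.unique hpow

theorem HasDerivWithinAt.le_of_le_of_eq {g h : ℝ → ℝ} {g' h' a : ℝ}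
    (hg : HasDerivWithinAt g g' (Ici a) a) (hh : HasDerivWithinAt h h' (Ici a) a)
    (hle : ∀ t ≥ a, g t ≤ h t) (heq : g a = h a) : g' ≤ h' := by
  have hmax : IsLocalMaxOn (fun t => g t - h t) (Ici a) a :=
    IsMaxOn.localize fun t ht => by simpa [heq] using hle t ht
  have hone : (1 : ℝ) ∈ posTangentConeAt (Ici a) a :=
    mem_posTangentConeAt_of_segment_subset
      ((segment_subset_Icc (by linarith)).trans Icc_subset_Ici_self)
  simpa [sub_nonpos] using hmax.hasFDerivWithinAt_nonpos (hg.sub hh).hasFDerivWithinAt hone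

namespace Seminorm

variable (p : Seminorm ℝ E) {f' : E →L[ℝ] ℝ} {x : E}

theorem hasFDerivAt_sq_half_apply_self (hf : HasFDerivAt (fun y => p y ^ 2 / 2) f' x) :
    f' x = p x ^ 2 := by
  have := hf.apply_self_eq_of_homogeneous 2 fun t => by
    rw [map_smul_eq_mul, Real.norm_eq_abs, mul_pow, sq_abs]
    ring
  rw [this]
  push_cast
  ring

theorem hasFDerivAt_sq_half_apply_le (hf : HasFDerivAt (fun y => p y ^ 2 / 2) f' x) (v : E) :
    f' v ≤ p x * p v := by
  have hline : HasDerivWithinAt (fun t : ℝ => p (x + t • v) ^ 2 / 2) (f' v) (Ici 0) 0 := by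
    have := hf.comp_hasDerivAt_of_eq (0 : ℝ)
      (((hasDerivAt_id' (0 : ℝ)).smul_const v).const_add x) (by simp)
    rw [one_smul] at this
    exact this.hasDerivWithinAt
  have hbound :
      HasDerivWithinAt (fun t : ℝ => (p x + t * p v) ^ 2 / 2) (p x * p v) (Ici 0) 0 :=
    (((((hasDerivAt_id (0 : ℝ)).mul_const (p v)).const_add (p x)).pow 2).div_const 2
      |>.congr_deriv (by
        simp only [Nat.cast_ofNat, id_eq, zero_mul, add_zero, Nat.add_one_sub_one, pow_one, one_mul]
        ring)).hasDerivWithinAt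
  refine hline.le_of_le_of_eq hbound (fun t ht => ?_) (by simp)
  have htri : p (x + t • v) ≤ p x + t * p v := by
    simpa [map_smul_eq_mul, abs_of_nonneg (show (0 : ℝ) ≤ t from ht)] using
      map_add_le_add p x (t • v)
  gcongr

end Seminorm

theorem stmt_13_general {d : ℕ}
    (N : (Fin d → ℝ) → ℝ)
    (hNsmul : ∀ (c : ℝ) (x : Fin d → ℝ), N (c • x) = |c| * N x)
    (hNadd : ∀ x y : Fin d → ℝ, N (x + y) ≤ N x + N y)
    (ℓ u : ℝ) (hℓ : 0 < ℓ)
    (hlow : ∀ x : Fin d → ℝ, ℓ * N x ≤ ‖x‖)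
    (hupp : ∀ x : Fin d → ℝ, ‖x‖ ≤ u * N x)
    (hdiff : Differentiable ℝ (fun x : Fin d → ℝ => N x ^ 2 / 2))
    (γbar : ℝ) (hγ0 : 0 ≤ γbar)
    (Fbar : (Fin d → ℝ) → (Fin d → ℝ))
    (hF : ∀ x y : Fin d → ℝ, ‖Fbar x - Fbar y‖ ≤ γbar * ‖x - y‖)
    (Qstar : Fin d → ℝ) (hfix : Fbar Qstar = Qstar)
    (Q : Fin d → ℝ) :
    fderiv ℝ (fun x : Fin d → ℝ => N x ^ 2 / 2) (Q - Qstar) (Fbar Q - Q) ≤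
      -2 * (1 - u / ℓ * γbar) * (N (Q - Qstar) ^ 2 / 2) := by
  let p : Seminorm ℝ (Fin d → ℝ) := Seminorm.of N hNadd hNsmul
  set x := Q - Qstar
  set v := Fbar Q - Fbar Qstar
  have hf : HasFDerivAt (fun y => p y ^ 2 / 2) (fderiv ℝ (fun y => N y ^ 2 / 2) x) x :=
    (hdiff x).hasFDerivAt
  have hv : N v ≤ u / ℓ * γbar * N x := by
    rw [div_mul_eq_mul_div, div_mul_eq_mul_div, le_div_iff₀' hℓ]
    calc ℓ * N v ≤ ‖v‖ := hlow v
      _ ≤ γbar * ‖x‖ := hF Q Qstar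
      _ ≤ γbar * (u * N x) := mul_le_mul_of_nonneg_left (hupp x) hγ0
      _ = u * γbar * N x := by ring
  have hsplit : Fbar Q - Q = v - x := by
    simp only [v, x, hfix]
    abel
  rw [hsplit, map_sub, p.hasFDerivAt_sq_half_apply_self hf]
  calc _ ≤ N x * N v - N x ^ 2 := sub_le_sub_right (p.hasFDerivAt_sq_half_apply_le hf v) _
    _ ≤ N x * (u / ℓ * γbar * N x) - N x ^ 2 := by gcongr; exact apply_nonneg p x
    _ = _ := by ring

/-- Negative-drift property of the generalized Moreau envelope `M = N²/2`
along a contraction `F̄` with fixed point `Q*`: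
`DM(Q − Q*)[F̄(Q) − Q] ≤ −2(1 − (u/ℓ)γ̄) M(Q − Q*)`. -/
theorem stmt_13 {d : ℕ} (hd : 1 ≤ d)
    (N : (Fin d → ℝ) → ℝ)
    (hN0 : ∀ x, 0 ≤ N x)
    (hNeq0 : ∀ x, N x = 0 ↔ x = 0)
    (hNsmul : ∀ (c : ℝ) (x : Fin d → ℝ), N (c • x) = |c| * N x)
    (hNadd : ∀ x y : Fin d → ℝ, N (x + y) ≤ N x + N y)
    (ℓ u : ℝ) (hℓ : 0 < ℓ) (hu : 0 < u)
    (hlow : ∀ x : Fin d → ℝ, ℓ * N x ≤ ‖x‖)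
    (hupp : ∀ x : Fin d → ℝ, ‖x‖ ≤ u * N x)
    (hdiff : Differentiable ℝ (fun x : Fin d → ℝ => N x ^ 2 / 2))
    (γbar : ℝ) (hγ0 : 0 ≤ γbar) (hγ1 : γbar < 1)
    (Fbar : (Fin d → ℝ) → (Fin d → ℝ))
    (hF : ∀ x y : Fin d → ℝ, ‖Fbar x - Fbar y‖ ≤ γbar * ‖x - y‖)
    (Qstar : Fin d → ℝ) (hfix : Fbar Qstar = Qstar)
    (Q : Fin d → ℝ) :
    fderiv ℝ (fun x : Fin d → ℝ => N x ^ 2 / 2) (Q - Qstar) (Fbar Q - Q) ≤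
      -2 * (1 - u / ℓ * γbar) * (N (Q - Qstar) ^ 2 / 2) :=
  stmt_13_general N hNsmul hNadd ℓ u hℓ hlow hupp hdiff γbar hγ0 Fbar hF Qstar hfix Q
end

section
/- Let X be a finite nonempty set and let P₁, P₂ be row-stochastic matrices on X with stationary distributions μ₁, μ₂, respectively. Suppose the lazy matrix 𝒫₁ = (P₁ + I)/2 has mixing parameters (C,ρ) with respect to μ₁, and let 𝒫₂ = (P₂ + I)/2. Then for every integer k ≥ 0: Σ_{x ∈ X} |μ₁(x) − μ₂(x)| ≤ 4 C ρ^k + k · max_x Σ_{x'} |𝒫₁(x,x') − 𝒫₂(x,x')|. -/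
section

variable {X : Type*} [Fintype X] [DecidableEq X] [Nonempty X]

/-- Continuity of stationary distributions in the transition matrix:
`‖μ₁ − μ₂‖₁ ≤ 4Cρ^k + k‖𝒫₁ − 𝒫₂‖_{∞,op}` for all `k ≥ 0`. -/
theorem stmt_18
    (P₁ P₂ : Matrix X X ℝ)
    (hP₁0 : ∀ x x', 0 ≤ P₁ x x') (hP₁1 : ∀ x, ∑ x', P₁ x x' = 1)
    (hP₂0 : ∀ x x', 0 ≤ P₂ x x') (hP₂1 : ∀ x, ∑ x', P₂ x x' = 1)
    (μ₁ μ₂ : X → ℝ)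
    (hμ₁0 : ∀ x, 0 ≤ μ₁ x) (hμ₁1 : ∑ x, μ₁ x = 1)
    (hμ₂0 : ∀ x, 0 ≤ μ₂ x) (hμ₂1 : ∑ x, μ₂ x = 1)
    (hstat₁ : ∀ x', ∑ x, μ₁ x * P₁ x x' = μ₁ x')
    (hstat₂ : ∀ x', ∑ x, μ₂ x * P₂ x x' = μ₂ x')
    (C ρ : ℝ) (hC : 0 < C) (hρ0 : 0 < ρ) (hρ1 : ρ < 1)
    (hmix : HasMixing (lazy P₁) μ₁ C ρ) :
    ∀ k : ℕ,
      ∑ x, |μ₁ x - μ₂ x| ≤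
        4 * C * ρ ^ k + (k : ℝ) * rowSumNorm (lazy P₁ - lazy P₂) := by
  intro k
  set Q₁ := lazy P₁ with hQ₁def
  set Q₂ := lazy P₂ with hQ₂def
  have hQ₁0 : ∀ x x', 0 ≤ Q₁ x x' := by
    intro x x'
    simp only [hQ₁def, lazy, Matrix.smul_apply, Matrix.add_apply, Matrix.one_apply, smul_eq_mul]
    split_ifs <;> linarith [hP₁0 x x']
  have hQ₁1 : ∀ x, ∑ x', Q₁ x x' = 1 := by
    intro x
    simp only [hQ₁def, lazy, Matrix.smul_apply, Matrix.add_apply, Matrix.one_apply, smul_eq_mul]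
    rw [← Finset.mul_sum, Finset.sum_add_distrib, hP₁1]
    norm_num [Finset.sum_ite_eq']
  have hstatQ₂ : ∀ x', ∑ x, μ₂ x * Q₂ x x' = μ₂ x' := by
    intro x'
    simp only [hQ₂def, lazy, Matrix.smul_apply, Matrix.add_apply, Matrix.one_apply, smul_eq_mul]
    have : ∀ x, μ₂ x * (2⁻¹ * (P₂ x x' + if x = x' then (1:ℝ) else 0))
        = 2⁻¹ * (μ₂ x * P₂ x x') + 2⁻¹ * (μ₂ x * if x = x' then (1:ℝ) else 0) := by
      intro x; ring
    rw [Finset.sum_congr rfl fun x _ => this x, Finset.sum_add_distrib,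
      ← Finset.mul_sum, ← Finset.mul_sum, hstat₂]
    have : ∑ x, (μ₂ x * if x = x' then (1:ℝ) else 0) = μ₂ x' := by
      simp [Finset.sum_ite_eq']
    rw [this]; ring
  set D := rowSumNorm (Q₁ - Q₂) with hDdef
  have hD : ∀ x, ∑ x', |Q₁ x x' - Q₂ x x'| ≤ D := by
    intro x
    have h := Finset.le_sup' (fun y => ∑ x', |(Q₁ - Q₂) y x'|) (Finset.mem_univ x)
    simp only [Matrix.sub_apply] at h
    exact h
  have hD0 : 0 ≤ D := le_trans (Finset.sum_nonneg fun _ _ => abs_nonneg _) (hD (Classical.arbitrary X))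
  set w : ℕ → X → ℝ := fun j x' => ∑ x, μ₂ x * (Q₁ ^ j) x x' with hwdef
  have hwsucc : ∀ j x', w (j+1) x' = ∑ x, w j x * Q₁ x x' := by
    intro j x'
    simp only [hwdef, pow_succ, Matrix.mul_apply, Finset.mul_sum, Finset.sum_mul]
    rw [Finset.sum_comm]
    exact Finset.sum_congr rfl fun y _ => Finset.sum_congr rfl fun x _ => by ring
  have hw : ∀ j, ∑ x', |w j x' - μ₂ x'| ≤ j * D := by
    intro j
    induction j with
    | zero =>
      have : ∀ x', w 0 x' = μ₂ x' := by
        intro x'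
        simp [hwdef, Matrix.one_apply, Finset.sum_ite_eq']
      simp [this]
    | succ j ih =>
      have key : ∀ x', w (j+1) x' - μ₂ x'
          = (∑ x, (w j x - μ₂ x) * Q₁ x x') + ∑ x, μ₂ x * (Q₁ x x' - Q₂ x x') := by
        intro x'
        rw [hwsucc, ← hstatQ₂ x', ← Finset.sum_add_distrib, ← Finset.sum_sub_distrib]
        exact Finset.sum_congr rfl fun x _ => by ring
      calc ∑ x', |w (j+1) x' - μ₂ x'|
          ≤ (∑ x', |∑ x, (w j x - μ₂ x) * Q₁ x x'|)
            + ∑ x', |∑ x, μ₂ x * (Q₁ x x' - Q₂ x x')| := by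
            rw [← Finset.sum_add_distrib]
            refine Finset.sum_le_sum fun x' _ => ?_
            rw [key x']
            exact abs_add_le _ _
        _ ≤ (∑ x', ∑ x, |w j x - μ₂ x| * Q₁ x x')
            + ∑ x', ∑ x, μ₂ x * |Q₁ x x' - Q₂ x x'| := by
            gcongr with x' _ x' _
            · exact le_trans (Finset.abs_sum_le_sum_abs _ _)
                (Finset.sum_le_sum fun x _ => by
                  rw [abs_mul, abs_of_nonneg (hQ₁0 x x')])
            · exact le_trans (Finset.abs_sum_le_sum_abs _ _)
                (Finset.sum_le_sum fun x _ => by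
                  rw [abs_mul, abs_of_nonneg (hμ₂0 x)])
        _ = (∑ x, |w j x - μ₂ x| * ∑ x', Q₁ x x')
            + ∑ x, μ₂ x * ∑ x', |Q₁ x x' - Q₂ x x'| := by
            congr 1
            · rw [Finset.sum_comm]
              exact Finset.sum_congr rfl fun x _ => (Finset.mul_sum _ _ _).symm
            · rw [Finset.sum_comm]
              exact Finset.sum_congr rfl fun x _ => (Finset.mul_sum _ _ _).symm
        _ ≤ (∑ x, |w j x - μ₂ x|) + ∑ x, μ₂ x * D := by
            refine add_le_add (Finset.sum_le_sum fun x _ => ?_) (Finset.sum_le_sum fun x _ => ?_)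
            · exact le_of_eq (by rw [hQ₁1 x, mul_one])
            · exact mul_le_mul_of_nonneg_left (hD x) (hμ₂0 x)
        _ ≤ j * D + D := by
            rw [← Finset.sum_mul, hμ₂1, one_mul]
            gcongr
        _ = (j + 1 : ℕ) * D := by push_cast; ring
  have hmain : ∑ x', |μ₁ x' - w k x'| ≤ 2 * C * ρ ^ k := by
    have key : ∀ x', μ₁ x' - w k x' = ∑ x, μ₂ x * (μ₁ x' - (Q₁ ^ k) x x') := by
      intro x'
      symm
      calc ∑ x, μ₂ x * (μ₁ x' - (Q₁ ^ k) x x')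
          = (∑ x, μ₂ x) * μ₁ x' - ∑ x, μ₂ x * (Q₁ ^ k) x x' := by
            rw [Finset.sum_mul, ← Finset.sum_sub_distrib]
            exact Finset.sum_congr rfl fun x _ => by ring
        _ = μ₁ x' - w k x' := by rw [hμ₂1, one_mul]
    calc ∑ x', |μ₁ x' - w k x'|
        ≤ ∑ x', ∑ x, μ₂ x * |(Q₁ ^ k) x x' - μ₁ x'| := by
          refine Finset.sum_le_sum fun x' _ => ?_
          rw [key x']
          refine le_trans (Finset.abs_sum_le_sum_abs _ _) (Finset.sum_le_sum fun x _ => ?_)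
          rw [abs_mul, abs_of_nonneg (hμ₂0 x), abs_sub_comm]
      _ = ∑ x, μ₂ x * ∑ x', |(Q₁ ^ k) x x' - μ₁ x'| := by
          rw [Finset.sum_comm]; simp [Finset.mul_sum]
      _ ≤ ∑ x, μ₂ x * (2 * (C * ρ ^ k)) := by
          gcongr with x _
          · exact hμ₂0 x
          · have := hmix k x
            nlinarith [this]
      _ = 2 * C * ρ ^ k := by rw [← Finset.sum_mul, hμ₂1]; ring
  calc ∑ x, |μ₁ x - μ₂ x|
      ≤ (∑ x, |μ₁ x - w k x|) + ∑ x, |w k x - μ₂ x| := by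
        rw [← Finset.sum_add_distrib]
        exact Finset.sum_le_sum fun x _ => abs_sub_le _ _ _
    _ ≤ 2 * C * ρ ^ k + k * D := add_le_add hmain (hw k)
    _ ≤ 4 * C * ρ ^ k + k * D := by
        have : (0:ℝ) < ρ ^ k := pow_pos hρ0 k
        nlinarith
end
end
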